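/- Over K = ℂ (with Hermitian inner products on V and W) and α ∈ ℝ, the level set Γ_{α,β} = {(v,w) ∈ V₀ × W₀ : (‖v‖² − α‖w‖²)/2 = β} intersects every ℂ*-orbit of the action λ·(v,w) = (λv, λ⁻¹w) for every β ∈ ℝ if and only if α > 0. -/

import Mathlib

/-! Only `t = ‖λ‖²` matters: `2H(λv, λ⁻¹w) = t‖v‖² − α‖w‖²/t`. For `α > 0` this tends to `∓∞`
as `t → 0, ∞`, and the quadratic `‖v‖²t² − 2βt − α‖w‖²` has a positive root; for `α ≤ 0` it is
positive, so negative levels are never reached. -/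

theorem exists_pos_mul_sub_div_eq {a c : ℝ} (ha : 0 < a) (hc : 0 < c) (β : ℝ) :
    ∃ t > 0, t * a - c / t = β := by
  set r := √(β ^ 2 + 4 * a * c)
  have hr : r ^ 2 = β ^ 2 + 4 * a * c := Real.sq_sqrt (by positivity)
  have hβr : 0 < β + r := by nlinarith [Real.sqrt_nonneg (β ^ 2 + 4 * a * c)]
  refine ⟨(β + r) / (2 * a), by positivity, ?_⟩
  field_simp
  linear_combination hr

theorem norm_smul_sq_sub_mul_norm_inv_smul_sq {𝕜 V W : Type*} [NormedField 𝕜]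
    [SeminormedAddCommGroup V] [NormedSpace 𝕜 V] [SeminormedAddCommGroup W] [NormedSpace 𝕜 W]
    (lam : 𝕜) (v : V) (w : W) (α : ℝ) :
    ‖lam • v‖ ^ 2 - α * ‖lam⁻¹ • w‖ ^ 2 = ‖lam‖ ^ 2 * ‖v‖ ^ 2 - α * ‖w‖ ^ 2 / ‖lam‖ ^ 2 := by
  rw [norm_smul, norm_smul, norm_inv]
  ring

theorem level_set_meets_every_orbit_iff_general (V W : Type*)
    [NormedAddCommGroup V] [InnerProductSpace ℂ V]
    [NormedAddCommGroup W] [InnerProductSpace ℂ W]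
    [Nontrivial V] [Nontrivial W] (α : ℝ) :
    (∀ β : ℝ, ∀ (v : V) (w : W), v ≠ 0 → w ≠ 0 →
      ∃ lam : ℂ, lam ≠ 0 ∧ (‖lam • v‖ ^ 2 - α * ‖lam⁻¹ • w‖ ^ 2) / 2 = β) ↔
    0 < α := by
  simp only [norm_smul_sq_sub_mul_norm_inv_smul_sq]
  constructor
  · intro h
    by_contra! hα
    obtain ⟨v, hv⟩ := exists_ne (0 : V)
    obtain ⟨w, hw⟩ := exists_ne (0 : W)
    obtain ⟨lam, hlam, hlevel⟩ := h (-1) v w hv hw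
    have hv_term : 0 < ‖lam‖ ^ 2 * ‖v‖ ^ 2 :=
      mul_pos (pow_pos (norm_pos_iff.2 hlam) 2) (pow_pos (norm_pos_iff.2 hv) 2)
    have hw_term : 0 ≤ -(α * ‖w‖ ^ 2 / ‖lam‖ ^ 2) := by
      rw [← neg_div, ← neg_mul]
      exact div_nonneg (mul_nonneg (neg_nonneg.2 hα) (by positivity)) (by positivity)
    linarith
  · intro hα β v w hv hw
    obtain ⟨t, ht, hlevel⟩ := exists_pos_mul_sub_div_eq (pow_pos (norm_pos_iff.2 hv) 2)
      (mul_pos hα (pow_pos (norm_pos_iff.2 hw) 2)) (2 * β)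
    refine ⟨√t, Complex.ofReal_ne_zero.2 (Real.sqrt_pos.2 ht).ne', ?_⟩
    rw [Complex.norm_real, Real.norm_of_nonneg (Real.sqrt_nonneg t), Real.sq_sqrt ht.le]
    linarith

/-- Over ℂ, the level set Γ_{α,β} = {H = β} of H(v,w) = (‖v‖² − α‖w‖²)/2
intersects every ℂ*-orbit of the action λ·(v,w) = (λv, λ⁻¹w) for every β ∈ ℝ
if and only if α > 0. -/
theorem level_set_meets_every_orbit_iff (V W : Type*)
    [NormedAddCommGroup V] [InnerProductSpace ℂ V] [FiniteDimensional ℂ V]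
    [NormedAddCommGroup W] [InnerProductSpace ℂ W] [FiniteDimensional ℂ W]
    [Nontrivial V] [Nontrivial W] (α : ℝ) :
    (∀ β : ℝ, ∀ (v : V) (w : W), v ≠ 0 → w ≠ 0 →
      ∃ lam : ℂ, lam ≠ 0 ∧ (‖lam • v‖ ^ 2 - α * ‖lam⁻¹ • w‖ ^ 2) / 2 = β) ↔
    0 < α :=
  level_set_meets_every_orbit_iff_general V W α
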